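/- For positive reals a, λ, σ_r², σ_{r,2}², define μ(t) = 2t/√(λσ_r²σ_{r,2}²) and δ(t) = t(1/σ_r² + 1/(λσ_{r,2}²)). Then as t → 0⁺, 1 - μ(t)·exp(-δ(t))·K1(μ(t)) = δ(t) + o(t); i.e., the outage probability of the relayed link is asymptotically t·(1/σ_r² + 1/(λσ_{r,2}²)) as the threshold t tends to 0. -/

import Mathlib

open MeasureTheory Real Filter Asymptotics

/-- The modified Bessel function of the second kind of order 1,
via the integral representation `K₁(x) = ∫₀^∞ exp(-x cosh t) cosh t dt`. -/
noncomputable def besselK1 (x : ℝ) : ℝ :=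
  ∫ t in Set.Ioi (0 : ℝ), Real.exp (-x * Real.cosh t) * Real.cosh t

open Set Topology

/-!
Since `d/dt (-exp (-x sinh t)) = x cosh t exp (-x sinh t)`, the latter integrates to `1` over
`(0, ∞)`. Writing `cosh t = sinh t + exp (-t)`,
`1 - x K₁(x) = ∫₀^∞ x cosh t exp (-x sinh t) (1 - exp (-x exp (-t))) dt`, and the integrand lies
between `0` and `x² exp (-x sinh t) ≤ x² exp (-x t² / 4)`. The Gaussian integral then gives
`0 ≤ 1 - x K₁(x) ≤ √π x^(3/2)`, so `1 - μ K₁(μ) = o(t)`; together with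
`exp (-δ) = 1 - δ + o(t)` this is the claim.
-/

namespace Real

lemma tendsto_sinh_atTop : Tendsto sinh atTop atTop :=
  tendsto_atTop_mono' atTop (eventually_ge_atTop 0 |>.mono fun _ ht => self_le_sinh_iff.2 ht)
    tendsto_id

lemma sq_div_four_le_sinh {t : ℝ} (ht : 0 ≤ t) : t ^ 2 / 4 ≤ sinh t := by
  have hexp := quadratic_le_exp_of_nonneg ht
  have hexp_neg : exp (-t) ≤ 1 := exp_le_one_iff.2 (neg_nonpos.2 ht)
  rw [sinh_eq]
  linarith

lemma cosh_mul_exp_neg_le_one {t : ℝ} (ht : 0 ≤ t) : cosh t * exp (-t) ≤ 1 := by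
  have h : exp (-t) * exp (-t) ≤ 1 :=
    mul_le_one₀ (exp_le_one_iff.2 (neg_nonpos.2 ht)) (exp_pos _).le
      (exp_le_one_iff.2 (neg_nonpos.2 ht))
  rw [cosh_eq, div_mul_eq_mul_div, add_mul, ← exp_add, add_neg_cancel, exp_zero]
  linarith

end Real

open Real

section BesselK1

variable {x : ℝ}

lemma hasDerivAt_neg_exp_neg_mul_sinh (x t : ℝ) :
    HasDerivAt (fun t => -exp (-(x * sinh t))) (x * cosh t * exp (-(x * sinh t))) t := by
  have h : HasDerivAt (fun t => -(x * sinh t)) (-(x * cosh t)) t :=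
    ((hasDerivAt_sinh t).const_mul x).neg
  exact h.exp.neg.congr_deriv (by ring)

lemma tendsto_neg_exp_neg_mul_sinh_atTop (hx : 0 < x) :
    Tendsto (fun t => -exp (-(x * sinh t))) atTop (𝓝 0) := by
  simpa using (tendsto_exp_atBot.comp
    (tendsto_neg_atTop_atBot.comp (tendsto_sinh_atTop.const_mul_atTop hx))).neg

lemma integrableOn_mul_cosh_mul_exp_neg_mul_sinh (hx : 0 < x) :
    IntegrableOn (fun t => x * cosh t * exp (-(x * sinh t))) (Ioi 0) :=
  integrableOn_Ioi_deriv_of_nonneg' (fun t _ => hasDerivAt_neg_exp_neg_mul_sinh x t)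
    (fun t _ => by positivity) (tendsto_neg_exp_neg_mul_sinh_atTop hx)

lemma integral_mul_cosh_mul_exp_neg_mul_sinh (hx : 0 < x) :
    ∫ t in Ioi 0, x * cosh t * exp (-(x * sinh t)) = 1 := by
  rw [integral_Ioi_of_hasDerivAt_of_tendsto' (fun t _ => hasDerivAt_neg_exp_neg_mul_sinh x t)
    (integrableOn_mul_cosh_mul_exp_neg_mul_sinh hx) (tendsto_neg_exp_neg_mul_sinh_atTop hx)]
  simp

lemma integrableOn_besselK1_integrand (hx : 0 < x) :
    IntegrableOn (fun t => exp (-x * cosh t) * cosh t) (Ioi 0) := by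
  refine ((integrableOn_mul_cosh_mul_exp_neg_mul_sinh hx).const_mul x⁻¹).mono'
    (by fun_prop) (ae_of_all _ fun t => ?_)
  rw [norm_of_nonneg (by positivity), mul_assoc, inv_mul_cancel_left₀ hx.ne', mul_comm]
  gcongr
  nlinarith [sinh_lt_cosh t]

lemma one_sub_mul_besselK1_eq_integral (hx : 0 < x) :
    1 - x * besselK1 x =
      ∫ t in Ioi 0, x * cosh t * (exp (-(x * sinh t)) - exp (-x * cosh t)) := by
  have hK : IntegrableOn (fun t => x * (exp (-x * cosh t) * cosh t)) (Ioi 0) :=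
    (integrableOn_besselK1_integrand hx).const_mul x
  have hpt : ∀ t, x * cosh t * (exp (-(x * sinh t)) - exp (-x * cosh t)) =
      x * cosh t * exp (-(x * sinh t)) - x * (exp (-x * cosh t) * cosh t) := fun t => by ring
  simp_rw [hpt]
  rw [integral_sub (integrableOn_mul_cosh_mul_exp_neg_mul_sinh hx) hK,
    integral_mul_cosh_mul_exp_neg_mul_sinh hx, besselK1, integral_const_mul]

lemma mul_cosh_mul_exp_sub_exp_nonneg (hx : 0 ≤ x) (t : ℝ) :
    0 ≤ x * cosh t * (exp (-(x * sinh t)) - exp (-x * cosh t)) := by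
  have hexp : exp (-x * cosh t) ≤ exp (-(x * sinh t)) := by
    gcongr
    nlinarith [sinh_lt_cosh t]
  have hcosh := cosh_pos t
  have hdiff := sub_nonneg.2 hexp
  positivity

lemma mul_cosh_mul_exp_sub_exp_le {t : ℝ} (hx : 0 ≤ x) (ht : 0 ≤ t) :
    x * cosh t * (exp (-(x * sinh t)) - exp (-x * cosh t)) ≤ x ^ 2 * exp (-(x / 4) * t ^ 2) := by
  have hsplit : exp (-x * cosh t) = exp (-(x * sinh t)) * exp (-(x * exp (-t))) := by
    rw [← exp_add, ← cosh_sub_sinh]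
    ring_nf
  have hlin : 1 - exp (-(x * exp (-t))) ≤ x * exp (-t) := by
    linarith [add_one_le_exp (-(x * exp (-t)))]
  calc x * cosh t * (exp (-(x * sinh t)) - exp (-x * cosh t))
      = x * cosh t * exp (-(x * sinh t)) * (1 - exp (-(x * exp (-t)))) := by
        rw [hsplit]; ring
    _ ≤ x * cosh t * exp (-(x * sinh t)) * (x * exp (-t)) := by
        have := cosh_pos t
        gcongr
    _ = x ^ 2 * exp (-(x * sinh t)) * (cosh t * exp (-t)) := by ring
    _ ≤ x ^ 2 * exp (-(x * sinh t)) * 1 := by gcongr; exact cosh_mul_exp_neg_le_one ht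
    _ ≤ x ^ 2 * exp (-(x / 4) * t ^ 2) := by
        rw [mul_one]
        gcongr
        nlinarith [sq_div_four_le_sinh ht]

lemma one_sub_mul_besselK1_nonneg (hx : 0 < x) : 0 ≤ 1 - x * besselK1 x := by
  rw [one_sub_mul_besselK1_eq_integral hx]
  exact setIntegral_nonneg measurableSet_Ioi fun t _ => mul_cosh_mul_exp_sub_exp_nonneg hx.le t

lemma one_sub_mul_besselK1_le (hx : 0 < x) : 1 - x * besselK1 x ≤ √π * (x * √x) := by
  have hgauss : IntegrableOn (fun t => x ^ 2 * exp (-(x / 4) * t ^ 2)) (Ioi 0) :=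
    ((integrable_exp_neg_mul_sq (by positivity)).const_mul _).integrableOn
  have hgap : IntegrableOn
      (fun t => x * cosh t * (exp (-(x * sinh t)) - exp (-x * cosh t))) (Ioi 0) := by
    refine hgauss.mono' (by fun_prop) ((ae_restrict_mem measurableSet_Ioi).mono fun t ht => ?_)
    rw [norm_of_nonneg (mul_cosh_mul_exp_sub_exp_nonneg hx.le t)]
    exact mul_cosh_mul_exp_sub_exp_le hx.le (le_of_lt ht)
  have hsqrt : √(π / (x / 4)) = 2 * √π / √x := by
    rw [show π / (x / 4) = 2 ^ 2 * π / x by field_simp; norm_num, sqrt_div' _ hx.le,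
      sqrt_mul' _ pi_pos.le, sqrt_sq zero_le_two]
  calc 1 - x * besselK1 x
      ≤ ∫ t in Ioi 0, x ^ 2 * exp (-(x / 4) * t ^ 2) := by
        rw [one_sub_mul_besselK1_eq_integral hx]
        exact setIntegral_mono_on hgap hgauss measurableSet_Ioi
          fun t ht => mul_cosh_mul_exp_sub_exp_le hx.le (le_of_lt ht)
    _ = √π * (x * √x) := by
        rw [integral_const_mul, integral_gaussian_Ioi, hsqrt]
        have hsx := sqrt_pos.2 hx
        field_simp
        rw [sq_sqrt hx.le]

lemma isLittleO_one_sub_mul_besselK1 :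
    (fun x => 1 - x * besselK1 x) =o[𝓝[>] 0] fun x => x := by
  have hbound : (fun x => 1 - x * besselK1 x) =O[𝓝[>] 0] fun x => x * √x :=
    IsBigO.of_bound √π <| eventually_mem_nhdsWithin.mono fun x (hx : 0 < x) => by
      rw [norm_of_nonneg (one_sub_mul_besselK1_nonneg hx), norm_of_nonneg (by positivity)]
      exact one_sub_mul_besselK1_le hx
  have hsqrt : (fun x => √x) =o[𝓝[>] 0] fun _ => (1 : ℝ) :=
    (isLittleO_one_iff ℝ).2 <| by
      simpa using (continuous_sqrt.tendsto 0).mono_left nhdsWithin_le_nhds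
  simpa using hbound.trans_isLittleO ((isBigO_refl (fun x : ℝ => x) _).mul_isLittleO hsqrt)

end BesselK1

lemma isLittleO_one_sub_exp_neg_mul_sub_mul (d : ℝ) :
    (fun t => 1 - exp (-(t * d)) - t * d) =o[𝓝 0] fun t => t := by
  have hlin : Tendsto (fun t : ℝ => -(t * d)) (𝓝 0) (𝓝 0) := by
    simpa using (tendsto_id (x := 𝓝 (0 : ℝ))).mul_const d |>.neg
  have h := ((exp_sub_sum_range_succ_isLittleO_pow 1).comp_tendsto hlin).neg_left.trans_isBigO
    ((isBigO_const_mul_self (-d) (fun t : ℝ => t) _).congr_left fun t => by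
      simp only [neg_mul, pow_one, Function.comp_apply, neg_inj]; ring)
  refine h.congr_left fun t => ?_
  simp only [Function.comp_apply, Finset.sum_range_succ, Finset.range_one, Finset.sum_singleton,
    pow_zero, pow_one, Nat.factorial_zero, Nat.factorial_one, Nat.cast_one, div_one, neg_sub]
  ring

/-- With `μ(t) = 2t/√(λσr²σr2²)` and `δ(t) = t(1/σr² + 1/(λσr2²))`, as `t → 0⁺`,
`1 - μ(t) exp(-δ(t)) K₁(μ(t)) = δ(t) + o(t)`. -/
theorem stmt_8 (σrsq σr2sq lam : ℝ) (hσr : 0 < σrsq) (hσr2 : 0 < σr2sq) (hlam : 0 < lam) :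
    (fun t : ℝ =>
        (1 - (2 * t / Real.sqrt (lam * σrsq * σr2sq)) *
            Real.exp (-(t * (1 / σrsq + 1 / (lam * σr2sq)))) *
            besselK1 (2 * t / Real.sqrt (lam * σrsq * σr2sq)))
          - t * (1 / σrsq + 1 / (lam * σr2sq)))
      =o[nhdsWithin 0 (Set.Ioi 0)] (fun t : ℝ => t) := by
  set s := √(lam * σrsq * σr2sq)
  set d := 1 / σrsq + 1 / (lam * σr2sq)
  have hs : 0 < s := sqrt_pos.2 (by positivity)
  have hμ : Tendsto (fun t => 2 * t / s) (𝓝[>] 0) (𝓝[>] 0) := by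
    refine tendsto_nhdsWithin_of_tendsto_nhds_of_eventually_within _ ?_
      (eventually_mem_nhdsWithin.mono fun t (ht : 0 < t) => mem_Ioi.2 (by positivity))
    simpa using ((continuous_const.mul continuous_id).div_const s).tendsto (0 : ℝ) |>.mono_left
      nhdsWithin_le_nhds
  have hbessel : (fun t => 1 - 2 * t / s * besselK1 (2 * t / s)) =o[𝓝[>] 0] fun t => t :=
    (isLittleO_one_sub_mul_besselK1.comp_tendsto hμ).trans_isBigO
      ((isBigO_const_mul_self (2 / s) (fun t : ℝ => t) _).congr_left fun t => by
        simp only [Function.comp_apply]; ring)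
  have hexp_bounded : (fun t => exp (-(t * d))) =O[𝓝[>] 0] fun _ => (1 : ℝ) :=
    ((continuous_id.mul continuous_const).neg.rexp.tendsto 0).isBigO_one ℝ |>.mono
      nhdsWithin_le_nhds
  -- `1 - μ e^{-δ} K₁(μ) - δ = (1 - e^{-δ} - δ) + e^{-δ} (1 - μ K₁(μ))`
  refine (((isLittleO_one_sub_exp_neg_mul_sub_mul d).mono nhdsWithin_le_nhds).add
    ((hexp_bounded.mul_isLittleO hbessel).congr_right fun t => one_mul t)).congr_left
    fun t => ?_
  ring
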